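/- Let q̂_t^ε(k) and q̂_t^0(k) be continuous families with 0 ≤ q̂_t^0(k) = e^{−(t/2)(|k|²+m²)}, 0 ≤ q̂_t^ε(k) ≤ e^{−(t/2)(|k|²/4 + m²)}, and 0 ≤ q̂_t^ε(k) − q̂_t^0(k) ≤ e^{−(t/2)(|k|²/4+m²)} (t/2)|k|² h(εk) where 0 ≤ h(εk) ≤ min(1, C ε²|k|²). Then for any 0 < κ ≤ 4, Σ_{k ∈ 2πℤ²} (1+|k|²)^{−κ} ∫₀^∞ |q̂_u^ε(k) − q̂_u^0(k)|² du ≤ C' ε^κ for a constant C' depending on κ, m, C. -/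

import Mathlib

/-!
Write `N = |k|²` and `a = N/4 + m²`, which is comparable to `1 + N`. For each mode the bound on
`qε - q0` dominates the time integral by `(Nh)²/4 · ∫ u² e^{-au} du = h²N²/(2a³)`, and
interpolating `h ≤ min 1 (Cε²N)` gives `h² ≤ (Cε²N)^{κ/2}` as long as `κ ≤ 4`. Hence the `k`-th
term is `O(ε^κ (1 + N)^{-(1+κ/2)})`, and this weight is summable over `ℤ²` because `κ > 0`.
-/

open MeasureTheory Set Real

/-- `|k|²` for `k` in the dual lattice `2πℤ²`. -/
noncomputable def dualNormSq (k : ℤ × ℤ) : ℝ :=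
  (2 * π * k.1) ^ 2 + (2 * π * k.2) ^ 2

lemma dualNormSq_nonneg (k : ℤ × ℤ) : 0 ≤ dualNormSq k := by
  unfold dualNormSq; positivity

lemma sq_norm_le_dualNormSq (x : Fin 2 → ℤ) : ‖x‖ ^ 2 ≤ dualNormSq (finTwoArrowEquiv ℤ x) := by
  have hnorm : ‖x‖ ≤ |(x 0 : ℝ)| + |(x 1 : ℝ)| := by
    refine (pi_norm_le_iff_of_nonneg (add_nonneg (abs_nonneg _) (abs_nonneg _))).mpr
      (Fin.forall_fin_two.mpr ⟨?_, ?_⟩) <;>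
    simp only [Int.norm_eq_abs] <;> linarith [abs_nonneg (x 0 : ℝ), abs_nonneg (x 1 : ℝ)]
  have hπ : 2 ≤ (2 * π) ^ 2 := by nlinarith [pi_gt_three]
  have hsq : (|(x 0 : ℝ)| + |(x 1 : ℝ)|) ^ 2 ≤ 2 * ((x 0 : ℝ) ^ 2 + (x 1 : ℝ) ^ 2) := by
    nlinarith [sq_abs (x 0 : ℝ), sq_abs (x 1 : ℝ), sq_nonneg (|(x 0 : ℝ)| - |(x 1 : ℝ)|)]
  show ‖x‖ ^ 2 ≤ (2 * π * x 0) ^ 2 + (2 * π * x 1) ^ 2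
  nlinarith [pow_le_pow_left₀ (norm_nonneg x) hnorm 2, sq_nonneg (x 0 : ℝ), sq_nonneg (x 1 : ℝ)]

lemma summable_one_add_dualNormSq_rpow_neg {s : ℝ} (hs : 1 < s) :
    Summable fun k : ℤ × ℤ => (1 + dualNormSq k) ^ (-s) := by
  refine (finTwoArrowEquiv ℤ).summable_iff.mp <|
    (EisensteinSeries.summable_one_div_norm_rpow (k := 2 * s) (by linarith)
      ).of_norm_bounded_eventually ?_
  filter_upwards [Filter.eventually_cofinite_ne 0] with x hx
  have hN := dualNormSq_nonneg (finTwoArrowEquiv ℤ x)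
  rw [Function.comp_apply, Real.norm_of_nonneg (Real.rpow_nonneg (by linarith) _),
    neg_mul_eq_mul_neg, Real.rpow_mul (norm_nonneg x), Real.rpow_two]
  exact Real.rpow_le_rpow_of_nonpos (by positivity [norm_pos_iff.mpr hx])
    ((sq_norm_le_dualNormSq x).trans (by linarith)) (by linarith)

lemma integral_sq_le_of_le_mul_exp {f : ℝ → ℝ} {a b : ℝ} (ha : 0 < a)
    (hf : ∀ u > 0, 0 ≤ f u ∧ f u ≤ exp (-(u / 2) * a) * (u / 2) * b) :
    ∫ u in Ioi 0, f u ^ 2 ≤ b ^ 2 / (2 * a ^ 3) := by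
  have hgamma : ∫ u in Ioi (0:ℝ), u ^ 2 * exp (-(a * u)) = 2 / a ^ 3 := by
    have := integral_rpow_mul_exp_neg_mul_Ioi (a := 3) (by norm_num) ha
    norm_num at this
    rw [this, inv_mul_eq_div]
  have hint : IntegrableOn (fun u : ℝ => u ^ 2 * exp (-(a * u))) (Ioi 0) := by
    simpa [Real.rpow_two] using
      integrableOn_rpow_mul_exp_neg_mul_rpow (s := 2) (p := 1) (by norm_num) one_pos ha
  calc ∫ u in Ioi 0, f u ^ 2
      ≤ ∫ u in Ioi 0, b ^ 2 / 4 * (u ^ 2 * exp (-(a * u))) := by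
        refine integral_mono_of_nonneg (ae_of_all _ fun u => sq_nonneg _) (hint.const_mul _) ?_
        filter_upwards [self_mem_ae_restrict measurableSet_Ioi] with u hu
        obtain ⟨hf0, hfle⟩ := hf u hu
        calc f u ^ 2 ≤ (exp (-(u / 2) * a) * (u / 2) * b) ^ 2 := pow_le_pow_left₀ hf0 hfle 2
          _ = b ^ 2 / 4 * (u ^ 2 * exp (-(a * u))) := by
            rw [mul_pow, mul_pow, sq (exp _), ← Real.exp_add]
            ring_nf
    _ = b ^ 2 / (2 * a ^ 3) := by
        rw [integral_const_mul, hgamma]; field_simp; ring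

lemma sq_le_rpow_of_le_min_one {x y p : ℝ} (hx : 0 ≤ x) (hxy : x ≤ min 1 y) (hp0 : 0 ≤ p)
    (hp2 : p ≤ 2) : x ^ 2 ≤ y ^ p :=
  calc x ^ 2 = x ^ (2 : ℝ) := (Real.rpow_two x).symm
    _ ≤ x ^ p := Real.rpow_le_rpow_of_exponent_ge' hx (hxy.trans (min_le_left _ _)) hp0 hp2
    _ ≤ y ^ p := Real.rpow_le_rpow hx (hxy.trans (min_le_right _ _)) hp0

lemma rpow_neg_mul_rpow_div_le {N a α κ : ℝ} (hN : 0 ≤ N) (hα : 0 < α) (ha : α * (1 + N) ≤ a)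
    (hκ : 0 ≤ κ) :
    (1 + N) ^ (-κ) * (N ^ (κ / 2) * N ^ 2 / (2 * a ^ 3))
      ≤ (1 + N) ^ (-(1 + κ / 2)) / (2 * α ^ 3) := by
  have hN1 : 0 < 1 + N := by linarith
  have hexp : (1 + N) ^ (-κ) * ((1 + N) ^ (κ / 2) * (1 + N) ^ (2 : ℝ) / (1 + N) ^ (3 : ℝ))
      = (1 + N) ^ (-(1 + κ / 2)) := by
    rw [mul_div_assoc, ← Real.rpow_sub hN1, ← Real.rpow_add hN1, ← Real.rpow_add hN1]
    ring_nf
  calc (1 + N) ^ (-κ) * (N ^ (κ / 2) * N ^ 2 / (2 * a ^ 3))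
      ≤ (1 + N) ^ (-κ) * ((1 + N) ^ (κ / 2) * (1 + N) ^ 2 / (2 * (α * (1 + N)) ^ 3)) := by
        gcongr <;> linarith
    _ = (1 + N) ^ (-κ) * ((1 + N) ^ (κ / 2) * (1 + N) ^ (2 : ℝ) / (1 + N) ^ (3 : ℝ))
          / (2 * α ^ 3) := by
        rw [Real.rpow_two, show (3 : ℝ) = (3 : ℕ) by norm_num, Real.rpow_natCast]
        field_simp
    _ = (1 + N) ^ (-(1 + κ / 2)) / (2 * α ^ 3) := by rw [hexp]

lemma rpow_neg_mul_integral_sq_le {f : ℝ → ℝ} {N m C ε κ c : ℝ} (hN : 0 ≤ N) (hm : m ≠ 0)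
    (hC : 0 ≤ C) (hε : 0 ≤ ε) (hκ0 : 0 ≤ κ) (hκ4 : κ ≤ 4)
    (hc : 0 ≤ c ∧ c ≤ min 1 (C * ε ^ 2 * N))
    (hf : ∀ u > 0, 0 ≤ f u ∧ f u ≤ exp (-(u / 2) * (N / 4 + m ^ 2)) * (u / 2) * N * c) :
    (1 + N) ^ (-κ) * ∫ u in Ioi 0, f u ^ 2
      ≤ C ^ (κ / 2) * ε ^ κ * ((1 + N) ^ (-(1 + κ / 2)) / (2 * min (1 / 4) (m ^ 2) ^ 3)) := by
  set a := N / 4 + m ^ 2 with ha_def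
  have ha : 0 < a := by positivity
  have hαa : min (1 / 4) (m ^ 2) * (1 + N) ≤ a := by
    nlinarith [min_le_left (1 / 4 : ℝ) (m ^ 2), min_le_right (1 / 4 : ℝ) (m ^ 2), ha_def]
  have hint : ∫ u in Ioi 0, f u ^ 2 ≤ c ^ 2 * N ^ 2 / (2 * a ^ 3) :=
    (integral_sq_le_of_le_mul_exp ha (b := N * c) fun u hu => by
      simpa only [mul_assoc] using hf u hu).trans_eq (by ring)
  have hc2 : c ^ 2 ≤ C ^ (κ / 2) * ε ^ κ * N ^ (κ / 2) :=
    calc c ^ 2 ≤ (C * ε ^ 2 * N) ^ (κ / 2) :=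
          sq_le_rpow_of_le_min_one hc.1 hc.2 (by linarith) (by linarith)
      _ = C ^ (κ / 2) * ε ^ κ * N ^ (κ / 2) := by
          rw [Real.mul_rpow (by positivity) hN, Real.mul_rpow hC (by positivity), ← Real.rpow_two,
            ← Real.rpow_mul hε]
          ring_nf
  calc (1 + N) ^ (-κ) * ∫ u in Ioi 0, f u ^ 2
      ≤ (1 + N) ^ (-κ) * (C ^ (κ / 2) * ε ^ κ * N ^ (κ / 2) * N ^ 2 / (2 * a ^ 3)) := by
        gcongr
        exact hint.trans (by gcongr)
    _ = C ^ (κ / 2) * ε ^ κ * ((1 + N) ^ (-κ) * (N ^ (κ / 2) * N ^ 2 / (2 * a ^ 3))) := by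
        ring
    _ ≤ _ := by
        gcongr
        exact rpow_neg_mul_rpow_div_le hN (by positivity) hαa hκ0

theorem gff_lattice_convergence_Hneg (m C : ℝ) (hm : 0 < m) (hC : 0 < C)
    (κ : ℝ) (hκ0 : 0 < κ) (hκ4 : κ ≤ 4) :
    ∃ C' > 0, ∀ ε > (0:ℝ), ∀ qε q0 : ℝ → ℤ × ℤ → ℝ, ∀ h : ℤ × ℤ → ℝ,
      (∀ t ≥ (0:ℝ), ∀ k, q0 t k = Real.exp (-(t / 2) * (dualNormSq k + m ^ 2))) →
      (∀ t ≥ (0:ℝ), ∀ k, 0 ≤ qε t k ∧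
          qε t k ≤ Real.exp (-(t / 2) * (dualNormSq k / 4 + m ^ 2))) →
      (∀ k, 0 ≤ h k ∧ h k ≤ min 1 (C * ε ^ 2 * dualNormSq k)) →
      (∀ t ≥ (0:ℝ), ∀ k, 0 ≤ qε t k - q0 t k ∧
          qε t k - q0 t k
            ≤ Real.exp (-(t / 2) * (dualNormSq k / 4 + m ^ 2)) * (t / 2) * dualNormSq k * h k) →
      (∑' k : ℤ × ℤ,
          (1 + dualNormSq k) ^ (-κ) * ∫ u in Ioi (0:ℝ), (qε u k - q0 u k) ^ 2)
        ≤ C' * ε ^ κ := by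
  set α := min (1 / 4) (m ^ 2)
  set w : ℤ × ℤ → ℝ := fun k => (1 + dualNormSq k) ^ (-(1 + κ / 2))
  have hw0 k : 0 ≤ w k := Real.rpow_nonneg (by linarith [dualNormSq_nonneg k]) _
  have hw : Summable w := summable_one_add_dualNormSq_rpow_neg (by linarith)
  have hS : 0 < ∑' k, w k := hw.tsum_pos hw0 0 (by simp [w, dualNormSq])
  refine ⟨C ^ (κ / 2) * (∑' k, w k) / (2 * α ^ 3), by positivity, ?_⟩
  intro ε hε qε q0 h _ _ hh hd
  have hmode k := rpow_neg_mul_integral_sq_le (dualNormSq_nonneg k) hm.ne' hC.le hε.le hκ0.le hκ4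
    (hh k) (fun u hu => hd u hu.le k)
  have hbound : Summable fun k => C ^ (κ / 2) * ε ^ κ * (w k / (2 * α ^ 3)) :=
    (hw.div_const _).mul_left _
  have hterm0 k : 0 ≤ (1 + dualNormSq k) ^ (-κ) * ∫ u in Ioi (0:ℝ), (qε u k - q0 u k) ^ 2 :=
    mul_nonneg (Real.rpow_nonneg (by linarith [dualNormSq_nonneg k]) _)
      (integral_nonneg fun u => sq_nonneg _)
  calc _ ≤ ∑' k, C ^ (κ / 2) * ε ^ κ * (w k / (2 * α ^ 3)) :=
        Summable.tsum_le_tsum hmode (hbound.of_nonneg_of_le hterm0 hmode) hbound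
    _ = C ^ (κ / 2) * (∑' k, w k) / (2 * α ^ 3) * ε ^ κ := by
        rw [tsum_mul_left, tsum_div_const]; ring
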